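/- arXiv:1306.2710 — 2 statements merged into one kernel-verified Lean document; each statement's English description precedes it below -/
import Mathlib

section
/- Fix integers n≥2 and 2≤k≤n, T>0, and a continuous cumulative distribution function F on [0,T] with F(0)=0, F(T)=1. Let (A_i)_{2≤i≤n} be i.i.d. with CDF F, let S be a uniformly random k-element subset of {1,...,n} independent of (A_i), let j_1<...<j_k enumerate S, and define S_{n,k}* := Σ_{m=1}^{k-1} max{A_{j_m+1},...,A_{j_{m+1}}}. Then E(S_{n,k}*) = k(k-1)·((n-k)!/n!)·Σ_{j=1}^{n-k+1} ((n-j)!/(n-j-k+1)!)·∫₀^T (1-F(t)^j) dt. -/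
open MeasureTheory ProbabilityTheory Filter Set

/-- The maximum of `A i` over `j < i ≤ j'` (junk value `0` if the range is empty). -/
noncomputable def blockMax (A : ℕ → ℝ) (j j' : ℕ) : ℝ :=
  if h : j < j' then (Finset.Ioc j j').sup' (by simpa [Finset.nonempty_Ioc] using h) A else 0

/-- The phylogenetic diversity (minus the stem age) of the tree spanned by the tips in the
finite set `s`: the sum, over each pair `j < j'` of consecutive elements of `s`, of the
maximum of the node depths `A (j+1), ..., A j'`. -/
noncomputable def survPDset (A : ℕ → ℝ) (s : Finset ℕ) : ℝ :=
  ∑ j ∈ s, ∑ j' ∈ s,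
    if j < j' ∧ (∀ i ∈ Finset.Ioo j j', i ∉ s) then blockMax A j j' else 0


/-!
Given the sampled set `s`, which is independent of the node depths, the diversity is a sum over
the pairs `a < b` of consecutive elements of `s` of the maximum of the `b - a` i.i.d. depths
`A (a+1), …, A b`. That maximum has CDF `F ^ (b - a)` on `[0, T]`, hence mean
`∫₀^T (1 - F t ^ (b - a)) dt`. Averaging over the `C(n, k)` equally likely sets, a pair at distance
`d` is consecutive in exactly `C(n - d - 1, k - 2)` of them, and there are `n - d` such pairs, so
`E(S*) = C(n, k)⁻¹ Σ_d (n - d) C(n - d - 1, k - 2) ∫₀^T (1 - F^d)`; expanding the binomial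
coefficients into factorials gives the formula.
-/

namespace Nat

theorem sub_mul_choose_div_choose {n k d : ℕ} (hk : 2 ≤ k) (hkn : k ≤ n)
    (hd : d ≤ n - k + 1) :
    ((n - d) * (n - d - 1).choose (k - 2) : ℕ) / (n.choose k : ℝ)
      = k * (k - 1) * ((n - k)! / n ! : ℝ) * ((n - d)! / (n - d - k + 1)! : ℝ) := by
  obtain ⟨j, rfl⟩ : ∃ j, k = j + 2 := ⟨k - 2, by omega⟩
  obtain ⟨q, hq⟩ : ∃ q, n - d = j + 1 + q := ⟨n - d - (j + 1), by omega⟩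
  -- for `q = 0` the truncated subtraction gives `n - d - k + 1 = 1`, harmless as `1! = 0!`
  have hfact : (n - d - (j + 2) + 1)! = q ! := by
    rcases q with _ | q
    · simp [hq]
    · congr 1; omega
  rw [hfact, hq, show j + 1 + q - 1 = q + j by omega, show j + 2 - 2 = j by omega,
    ← choose_mul_factorial_mul_factorial hkn, show j + 1 + q = (q + j) + 1 by omega,
    factorial_succ (q + j), ← add_choose_mul_factorial_mul_factorial q j, factorial_succ (j + 1),
    factorial_succ j]
  have : (n.choose (j + 2) : ℝ) ≠ 0 := by exact_mod_cast (choose_pos hkn).ne'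
  push_cast
  field_simp
  ring

end Nat

namespace Finset

open scoped _root_.Nat

lemma card_filter_consecutive_mem_powersetCard {n k a b : ℕ} (hk : 2 ≤ k) (ha : 1 ≤ a)
    (hab : a < b) (hbn : b ≤ n) :
    #{s ∈ (Icc 1 n).powersetCard k | a ∈ s ∧ b ∈ s ∧ ∀ i ∈ Ioo a b, i ∉ s}
      = (n - (b - a) - 1).choose (k - 2) := by
  have hR : #(Icc 1 n \ Icc a b) = n - (b - a) - 1 := by
    rw [card_sdiff_of_subset (Icc_subset_Icc ha hbn), Nat.card_Icc, Nat.card_Icc]; omega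
  have haI : a ∈ Icc a b := left_mem_Icc.mpr hab.le
  have hbI : b ∈ Icc a b := right_mem_Icc.mpr hab.le
  rw [← hR, ← card_powersetCard]
  refine card_nbij' (· \ Icc a b) (· ∪ {a, b}) ?_ ?_ ?_ ?_
  · rintro s hs
    simp only [mem_coe, mem_filter, mem_powersetCard] at hs
    obtain ⟨⟨hsub, hcard⟩, has, hbs, hgap⟩ := hs
    have hinter : s ∩ Icc a b = {a, b} := by
      ext x
      simp only [mem_inter, mem_Icc, mem_insert, mem_singleton]
      constructor
      · rintro ⟨hx, hax, hxb⟩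
        by_contra! h
        exact hgap x (mem_Ioo.mpr ⟨by omega, by omega⟩) hx
      · rintro (rfl | rfl)
        exacts [⟨has, le_rfl, hab.le⟩, ⟨hbs, hab.le, le_rfl⟩]
    rw [← card_sdiff_add_card_inter s (Icc a b), hinter, card_pair hab.ne] at hcard
    simp only [mem_coe, mem_powersetCard]
    exact ⟨sdiff_subset_sdiff hsub le_rfl, by omega⟩
  · rintro t ht
    simp only [mem_coe, mem_powersetCard, subset_sdiff] at ht
    obtain ⟨⟨htsub, htdisj⟩, hcard⟩ := ht
    have hat : a ∉ t := fun h => disjoint_left.mp htdisj h haI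
    have hbt : b ∉ t := fun h => disjoint_left.mp htdisj h hbI
    simp only [mem_coe, mem_filter, mem_powersetCard]
    refine ⟨⟨union_subset htsub ?_, ?_⟩, by simp, by simp, fun i hi hit => ?_⟩
    · exact (insert_subset haI (singleton_subset_iff.mpr hbI)).trans (Icc_subset_Icc ha hbn)
    · rw [card_union_of_disjoint (by simp [hat, hbt]), card_pair hab.ne]; omega
    · have := mem_Ioo.mp hi
      rcases mem_union.mp hit with h | h
      · exact disjoint_left.mp htdisj h (Ioo_subset_Icc_self hi)
      · rcases mem_insert.mp h with rfl | h
        · omega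
        · rw [mem_singleton.mp h] at this; omega
  · rintro s hs
    simp only [mem_coe, mem_filter, mem_powersetCard] at hs
    obtain ⟨-, has, hbs, hgap⟩ := hs
    ext x
    simp only [mem_union, mem_sdiff, mem_Icc, mem_insert, mem_singleton]
    constructor
    · rintro (⟨hx, -⟩ | rfl | rfl) <;> assumption
    · intro hx
      by_contra! h
      obtain ⟨hIcc, hxa, hxb⟩ := h
      have := hIcc hx
      exact hgap x (mem_Ioo.mpr ⟨by omega, by omega⟩) hx
  · rintro t ht
    simp only [mem_coe, mem_powersetCard, subset_sdiff] at ht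
    ext x
    simp only [mem_sdiff, mem_union, mem_insert, mem_singleton, mem_Icc]
    constructor
    · rintro ⟨hx | rfl | rfl, h⟩
      · exact hx
      all_goals omega
    · intro hx
      exact ⟨Or.inl hx, fun h => disjoint_left.mp ht.1.2 hx (by simpa using h)⟩

lemma sum_Icc_reflect {M : Type*} [AddCommMonoid M] (n : ℕ) (f : ℕ → M) :
    ∑ a ∈ Icc 1 n, f (n + 1 - a) = ∑ d ∈ Icc 1 n, f d := by
  refine sum_nbij' (fun a => n + 1 - a) (fun a => n + 1 - a) ?_ ?_ ?_ ?_ (fun _ _ => rfl) <;>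
    intro a ha <;> simp only [mem_Icc] at ha ⊢ <;> omega

lemma sum_Icc_sum_Icc_ite_lt {M : Type*} [AddCommMonoid M] (n : ℕ) (h : ℕ → M) :
    ∑ a ∈ Icc 1 n, ∑ b ∈ Icc 1 n, (if a < b then h (b - a) else 0)
      = ∑ d ∈ Icc 1 n, (n - d) • h d := by
  induction n with
  | zero => simp
  | succ n ih =>
    -- the new column `b = n + 1` adds `∑ a, h (n + 1 - a) = ∑ d, h d`, the new row nothing
    have hlast : ∀ a ∈ Icc 1 n, (if a < n + 1 then h (n + 1 - a) else 0) = h (n + 1 - a) :=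
      fun a ha => if_pos (by rw [mem_Icc] at ha; omega)
    have hrow : ∑ b ∈ Icc 1 (n + 1), (if n + 1 < b then h (b - (n + 1)) else 0) = 0 :=
      sum_eq_zero fun b hb => if_neg (by rw [mem_Icc] at hb; omega)
    have hcoef : ∀ d ∈ Icc 1 n, (n + 1 - d) • h d = (n - d) • h d + h d := fun d hd => by
      rw [show n + 1 - d = n - d + 1 by rw [mem_Icc] at hd; omega, succ_nsmul]
    rw [sum_Icc_succ_top (by omega), hrow, add_zero]
    simp only [sum_Icc_succ_top (show 1 ≤ n + 1 by omega) (fun b => if _ < b then _ else _),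
      sum_add_distrib, sum_congr rfl hlast, ih, sum_Icc_reflect]
    rw [sum_Icc_succ_top (by omega), Nat.sub_self, zero_nsmul, add_zero, sum_congr rfl hcoef,
      sum_add_distrib]

lemma sum_powersetCard_sum_consecutive {M : Type*} [AddCommMonoid M] {n k : ℕ} (hk : 2 ≤ k)
    (h : ℕ → M) :
    ∑ s ∈ (Icc 1 n).powersetCard k, ∑ a ∈ s, ∑ b ∈ s,
        (if a < b ∧ ∀ i ∈ Ioo a b, i ∉ s then h (b - a) else 0)
      = ∑ d ∈ Icc 1 n, ((n - d) * (n - d - 1).choose (k - 2)) • h d := by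
  have hextend : ∀ s ∈ (Icc 1 n).powersetCard k,
      ∑ a ∈ s, ∑ b ∈ s, (if a < b ∧ ∀ i ∈ Ioo a b, i ∉ s then h (b - a) else 0)
        = ∑ a ∈ Icc 1 n, ∑ b ∈ Icc 1 n,
            (if a ∈ s ∧ b ∈ s ∧ a < b ∧ ∀ i ∈ Ioo a b, i ∉ s then h (b - a) else 0) := by
    intro s hs
    have hsub := (mem_powersetCard.mp hs).1
    simp only [ite_and, sum_ite_irrel, sum_const_zero, sum_ite_mem, inter_eq_right.mpr hsub]
  have hcount : ∀ a ∈ Icc 1 n, ∀ b ∈ Icc 1 n,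
      ∑ s ∈ (Icc 1 n).powersetCard k,
          (if a ∈ s ∧ b ∈ s ∧ a < b ∧ ∀ i ∈ Ioo a b, i ∉ s then h (b - a) else 0)
        = if a < b then (n - (b - a) - 1).choose (k - 2) • h (b - a) else 0 := by
    intro a ha b hb
    simp only [mem_Icc] at ha hb
    split_ifs with hab
    · rw [← sum_filter, sum_const, ← card_filter_consecutive_mem_powersetCard hk ha.1 hab hb.2]
      congr 2
      ext s
      simp only [mem_filter]
      tauto
    · exact sum_eq_zero fun s _ => if_neg (by tauto)
  rw [sum_congr rfl hextend, sum_comm]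
  simp only [sum_comm (s := (Icc 1 n).powersetCard k)]
  rw [sum_congr rfl fun a ha => sum_congr rfl fun b hb => hcount a ha b hb,
    sum_Icc_sum_Icc_ite_lt n (fun d => (n - d - 1).choose (k - 2) • h d)]
  simp only [smul_smul]

lemma sum_Icc_sub_mul_choose_div_choose {n k : ℕ} (hk : 2 ≤ k) (hkn : k ≤ n) (h : ℕ → ℝ) :
    (∑ d ∈ Icc 1 n, ((n - d) * (n - d - 1).choose (k - 2)) • h d) / n.choose k
      = k * (k - 1) * ((n - k)! / n ! : ℝ)
          * ∑ d ∈ Icc 1 (n - k + 1), ((n - d)! / (n - d - k + 1)! : ℝ) * h d := by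
  have hvanish : ∀ d ∈ Icc 1 n, d ∉ Icc 1 (n - k + 1) →
      ((n - d) * (n - d - 1).choose (k - 2)) • h d = 0 := by
    intro d hd hd'
    simp only [mem_Icc] at hd hd'
    rcases (show n - d = 0 ∨ n - d - 1 < k - 2 by omega) with hzero | hlt
    · rw [hzero, zero_mul, zero_smul]
    · rw [Nat.choose_eq_zero_of_lt hlt, mul_zero, zero_smul]
  have hsub : Icc 1 (n - k + 1) ⊆ Icc 1 n := Icc_subset_Icc_right (by omega)
  rw [← sum_subset hsub hvanish, sum_div, mul_sum]
  refine sum_congr rfl fun d hd => ?_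
  rw [nsmul_eq_mul, mul_div_right_comm, Nat.sub_mul_choose_div_choose hk hkn (mem_Icc.mp hd).2]
  ring

end Finset

section IndependentIndex

variable {Ω β ι E : Type*} [MeasurableSpace Ω] {μ : Measure Ω}
  [NormedAddCommGroup E] [NormedSpace ℝ E]

lemma nullMeasurableSet_of_sum_measure_eq [IsFiniteMeasure μ] {P : Finset ι} {V : ι → Set Ω}
    (hcover : ∀ ω, ∃ i ∈ P, ω ∈ V i) (hsum : ∑ i ∈ P, μ (V i) = μ univ) {i : ι} (hi : i ∈ P) :
    NullMeasurableSet (V i) μ := by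
  classical
  set H := fun j => toMeasurable μ (V j)
  set K := ⋃ j ∈ P.erase i, H j
  have hKmeas : MeasurableSet K :=
    Finset.measurableSet_biUnion _ fun j _ => measurableSet_toMeasurable μ (V j)
  have hcompl : (V i)ᶜ ⊆ K := by
    intro ω hω
    obtain ⟨j, hj, hωj⟩ := hcover ω
    exact mem_biUnion (Finset.mem_erase.mpr ⟨by rintro rfl; exact hω hωj, hj⟩)
      (subset_toMeasurable μ (V j) hωj)
  have hunion : H i ∪ K = univ :=
    eq_univ_of_forall fun ω => (em (ω ∈ V i)).imp (subset_toMeasurable μ (V i) ·) (hcompl ·)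
  -- `μ (H i) + μ K ≤ ∑ j ∈ P, μ (V j) = μ (H i ∪ K)`, so the overlap, which contains
  -- `H i \ V i`, is null
  have hinter : μ (H i ∩ K) = 0 := by
    have hK : μ K ≤ ∑ j ∈ P.erase i, μ (V j) :=
      (measure_biUnion_finset_le _ _).trans_eq (by simp only [H, measure_toMeasurable])
    have := measure_union_add_inter (μ := μ) (H i) hKmeas
    rw [hunion, measure_toMeasurable] at this
    have hle : μ univ + μ (H i ∩ K) ≤ μ univ + 0 := by
      rw [this, add_zero, ← hsum, ← Finset.add_sum_erase P _ hi]
      gcongr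
    exact le_zero_iff.mp ((ENNReal.add_le_add_iff_left (measure_ne_top μ univ)).mp hle)
  have hae : V i =ᵐ[μ] H i := by
    refine ae_eq_set.mpr ⟨?_, measure_mono_null (inter_subset_inter_right (H i) hcompl) hinter⟩
    simp [H, sdiff_eq_empty.mpr (subset_toMeasurable μ (V i))]
  exact (measurableSet_toMeasurable μ (V i)).nullMeasurableSet.congr hae.symm

variable [MeasurableSpace β]

lemma setIntegral_comp_eq_measureReal_smul {X : Ω → β} (hX : Measurable X) {V : Set Ω}
    (hV : ∀ t, MeasurableSet t → μ (V ∩ X ⁻¹' t) = μ V * μ (X ⁻¹' t))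
    {f : β → E} (hf : StronglyMeasurable f) :
    ∫ ω in V, f (X ω) ∂μ = μ.real V • ∫ ω, f (X ω) ∂μ := by
  have hmap : (μ.restrict V).map X = μ V • μ.map X := by
    ext t ht
    rw [Measure.map_apply hX ht, Measure.restrict_apply (hX ht), inter_comm, hV t ht,
      Measure.smul_apply, smul_eq_mul, Measure.map_apply hX ht]
  rw [← integral_map hX.aemeasurable hf.aestronglyMeasurable, hmap, integral_smul_measure,
    integral_map hX.aemeasurable hf.aestronglyMeasurable, measureReal_def]

theorem integral_comp_eq_sum_of_indep_index [IsFiniteMeasure μ] {S : Ω → ι} {X : Ω → β}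
    (hX : Measurable X) {P : Finset ι} (hSP : ∀ ω, S ω ∈ P)
    (hsum : ∑ s ∈ P, μ {ω | S ω = s} = μ univ)
    (hindep : ∀ s ∈ P, ∀ t, MeasurableSet t →
      μ ({ω | S ω = s} ∩ X ⁻¹' t) = μ {ω | S ω = s} * μ (X ⁻¹' t))
    {f : ι → β → E} (hf : ∀ s ∈ P, StronglyMeasurable (f s))
    (hint : ∀ s ∈ P, Integrable (fun ω => f s (X ω)) μ) :
    ∫ ω, f (S ω) (X ω) ∂μ = ∑ s ∈ P, μ.real {ω | S ω = s} • ∫ ω, f s (X ω) ∂μ := by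
  have hnull : ∀ s ∈ P, NullMeasurableSet {ω | S ω = s} μ :=
    fun s hs => nullMeasurableSet_of_sum_measure_eq (fun ω => ⟨S ω, hSP ω, rfl⟩) hsum hs
  have hsplit : ∀ ω, f (S ω) (X ω)
      = ∑ s ∈ P, {ω | S ω = s}.indicator (fun ω => f s (X ω)) ω := fun ω => by
    rw [Finset.sum_eq_single_of_mem (S ω) (hSP ω) fun s _ hs => by simp [Ne.symm hs]]
    simp
  simp_rw [hsplit]
  rw [integral_finsetSum _ fun s hs => (hint s hs).indicator₀ (hnull s hs)]
  refine Finset.sum_congr rfl fun s hs => ?_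
  rw [integral_indicator₀ (hnull s hs),
    setIntegral_comp_eq_measureReal_smul hX (hindep s hs) (hf s hs)]

end IndependentIndex

section BlockMaxima

variable {Ω : Type*} [MeasurableSpace Ω] {μ : Measure Ω}

lemma ae_mem_Ioc_of_measureReal_le [IsProbabilityMeasure μ] {M : Ω → ℝ} (hM : Measurable M)
    {T : ℝ} (h0 : μ.real {ω | M ω ≤ 0} = 0) (hT : μ.real {ω | M ω ≤ T} = 1) :
    ∀ᵐ ω ∂μ, M ω ∈ Ioc 0 T := by
  have hT' : μ.real {ω | M ω ≤ T}ᶜ = 0 := by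
    rw [probReal_compl_eq_one_sub (s := {ω | M ω ≤ T}) (hM measurableSet_Iic), hT, sub_self]
  rw [measureReal_eq_zero_iff] at h0 hT'
  rw [ae_iff]
  refine measure_mono_null (fun ω hω => ?_) (measure_union_null h0 hT')
  simp only [mem_Ioc, not_and_or, not_lt, mem_union, mem_compl_iff] at hω ⊢
  exact hω

theorem integral_eq_intervalIntegral_one_sub_cdf [IsProbabilityMeasure μ] {M : Ω → ℝ}
    (hM : Measurable M) {T : ℝ} (hT : 0 ≤ T) {G : ℝ → ℝ}
    (hcdf : ∀ t ∈ Icc 0 T, μ.real {ω | M ω ≤ t} = G t) (hG0 : G 0 = 0) (hGT : G T = 1) :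
    Integrable M μ ∧ ∫ ω, M ω ∂μ = ∫ t in 0..T, 1 - G t := by
  have hIoc := ae_mem_Ioc_of_measureReal_le hM ((hcdf 0 ⟨le_rfl, hT⟩).trans hG0)
    ((hcdf T ⟨hT, le_rfl⟩).trans hGT)
  have hint : Integrable M μ := .of_bound hM.aestronglyMeasurable T <|
    hIoc.mono fun ω h => by rw [Real.norm_eq_abs, abs_le]; exact ⟨by linarith [h.1], h.2⟩
  have htail : ∀ t ∈ Ioi (0 : ℝ),
      μ.real {ω | t < M ω} = (Ioc 0 T).indicator (fun t => 1 - G t) t := by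
    intro t ht
    by_cases htT : t ≤ T
    · rw [indicator_of_mem (show t ∈ Ioc 0 T from ⟨ht, htT⟩), ← hcdf t ⟨le_of_lt ht, htT⟩,
        ← probReal_compl_eq_one_sub (s := {ω | M ω ≤ t}) (hM measurableSet_Iic)]
      simp only [compl_ofPred, not_le]
    · rw [indicator_of_notMem fun h => htT h.2, measureReal_eq_zero_iff]
      refine measure_mono_null (fun ω hω => ?_) (ae_iff.mp hIoc)
      exact fun h => htT (le_trans (le_of_lt hω) h.2)
  rw [hint.integral_eq_integral_meas_lt (hIoc.mono fun ω h => le_of_lt h.1),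
    setIntegral_congr_fun measurableSet_Ioi htail, setIntegral_indicator measurableSet_Ioc,
    inter_eq_right.mpr Ioc_subset_Ioi_self, intervalIntegral.integral_of_le hT]
  exact ⟨hint, rfl⟩

lemma measurable_blockMax (a b : ℕ) : Measurable fun A : ℕ → ℝ => blockMax A a b := by
  unfold blockMax
  split_ifs with hab
  · convert Finset.measurable_sup' (α := ℝ) (Finset.nonempty_Ioc.mpr hab)
      fun i _ => measurable_pi_apply i using 1
    ext A
    rw [Finset.sup'_apply]
  · exact measurable_const

lemma measureReal_blockMax_le {A : ℕ → Ω → ℝ} (hA : iIndepFun A μ) {a b : ℕ} (hab : a < b)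
    (t : ℝ) :
    μ.real {ω | blockMax (fun i => A i ω) a b ≤ t}
      = ∏ i ∈ Finset.Ioc a b, μ.real {ω | A i ω ≤ t} := by
  have hset : {ω | blockMax (fun i => A i ω) a b ≤ t}
      = ⋂ i ∈ Finset.Ioc a b, A i ⁻¹' Iic t := by
    ext ω
    simp [blockMax, hab]
  rw [hset, measureReal_def, hA.measure_inter_preimage_eq_mul _ fun _ _ => measurableSet_Iic,
    ENNReal.toReal_prod]
  rfl

theorem integral_blockMax [IsProbabilityMeasure μ] {A : ℕ → Ω → ℝ}
    (hAmeas : ∀ i, Measurable (A i)) (hA : iIndepFun A μ) {T : ℝ} (hT : 0 ≤ T) {F : ℝ → ℝ}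
    (hF0 : F 0 = 0) (hFT : F T = 1)
    (hAcdf : ∀ i, ∀ t ∈ Icc 0 T, μ.real {ω | A i ω ≤ t} = F t) (a b : ℕ) :
    Integrable (fun ω => blockMax (fun i => A i ω) a b) μ ∧
      ∫ ω, blockMax (fun i => A i ω) a b ∂μ = ∫ t in 0..T, 1 - F t ^ (b - a) := by
  by_cases hab : a < b
  · have hM : Measurable fun ω => blockMax (fun i => A i ω) a b :=
      (measurable_blockMax a b).comp (measurable_pi_lambda _ hAmeas)
    refine integral_eq_intervalIntegral_one_sub_cdf hM hT (fun t ht => ?_)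
      (by rw [hF0, zero_pow (by omega)]) (by rw [hFT, one_pow])
    rw [measureReal_blockMax_le hA hab, Finset.prod_congr rfl fun i _ => hAcdf i t ht,
      Finset.prod_const, Nat.card_Ioc]
  -- for `b ≤ a` the junk value `blockMax = 0` matches the integrand `1 - F t ^ 0 = 0`
  · simp [blockMax, hab, Nat.sub_eq_zero_of_le (not_lt.mp hab)]

end BlockMaxima

section SurvivingDiversity

variable {Ω : Type*} [MeasurableSpace Ω] {μ : Measure Ω}

lemma measurable_survPDset (s : Finset ℕ) : Measurable fun A : ℕ → ℝ => survPDset A s :=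
  Finset.measurable_sum _ fun a _ => Finset.measurable_sum _ fun b _ => by
    split_ifs
    exacts [measurable_blockMax a b, measurable_const]

lemma integral_survPDset {X : Ω → ℕ → ℝ} {g : ℕ → ℝ}
    (hblock : ∀ a b, Integrable (fun ω => blockMax (X ω) a b) μ ∧
      ∫ ω, blockMax (X ω) a b ∂μ = g (b - a)) (s : Finset ℕ) :
    Integrable (fun ω => survPDset (X ω) s) μ ∧
      ∫ ω, survPDset (X ω) s ∂μ =
        ∑ a ∈ s, ∑ b ∈ s, if a < b ∧ ∀ i ∈ Finset.Ioo a b, i ∉ s then g (b - a) else 0 := by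
  have hterm : ∀ a b : ℕ, Integrable (fun ω =>
        if a < b ∧ ∀ i ∈ Finset.Ioo a b, i ∉ s then blockMax (X ω) a b else 0) μ ∧
      ∫ ω, (if a < b ∧ ∀ i ∈ Finset.Ioo a b, i ∉ s then blockMax (X ω) a b else 0) ∂μ =
        if a < b ∧ ∀ i ∈ Finset.Ioo a b, i ∉ s then g (b - a) else 0 := by
    intro a b
    split_ifs
    exacts [hblock a b, ⟨integrable_zero _ _ _, integral_zero _ _⟩]
  have hrow : ∀ a : ℕ, Integrable (fun ω => ∑ b ∈ s,
      if a < b ∧ ∀ i ∈ Finset.Ioo a b, i ∉ s then blockMax (X ω) a b else 0) μ :=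
    fun a => integrable_finsetSum _ fun b _ => (hterm a b).1
  unfold survPDset
  refine ⟨integrable_finsetSum _ fun a _ => hrow a, ?_⟩
  rw [integral_finsetSum _ fun a _ => hrow a]
  exact Finset.sum_congr rfl fun a _ => (integral_finsetSum _ fun b _ => (hterm a b).1).trans
    (Finset.sum_congr rfl fun b _ => (hterm a b).2)

end SurvivingDiversity

theorem expected_PD_k_of_n_sampling_general
    {Ω : Type*} [MeasurableSpace Ω] (μ : Measure Ω) [IsProbabilityMeasure μ]
    (n k : ℕ) (hk2 : 2 ≤ k) (hkn : k ≤ n)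
    (T : ℝ) (hT : 0 < T)
    (F : ℝ → ℝ)
    (hF0 : F 0 = 0) (hFT : F T = 1)
    (A : ℕ → Ω → ℝ) (hAmeas : ∀ i, Measurable (A i))
    (hAiid : iIndepFun A μ)
    (hAcdf : ∀ i, ∀ t ∈ Set.Icc 0 T, (μ {ω | A i ω ≤ t}).toReal = F t)
    (S : Ω → Finset ℕ)
    (hSrange : ∀ ω, S ω ⊆ Finset.Icc 1 n ∧ (S ω).card = k)
    (hSunif : ∀ s : Finset ℕ, s ⊆ Finset.Icc 1 n → s.card = k →
      (μ {ω | S ω = s}).toReal = 1 / (n.choose k : ℝ))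
    (hindep : ∀ (s : Finset ℕ) (t : Set (ℕ → ℝ)), MeasurableSet t →
      μ ({ω | S ω = s} ∩ (fun ω i => A i ω) ⁻¹' t)
        = μ {ω | S ω = s} * μ ((fun ω i => A i ω) ⁻¹' t)) :
    ∫ ω, survPDset (fun i => A i ω) (S ω) ∂μ
      = (k : ℝ) * ((k : ℝ) - 1) * ((Nat.factorial (n - k) : ℝ) / (Nat.factorial n : ℝ))
        * ∑ j ∈ Finset.Icc 1 (n - k + 1),
            ((Nat.factorial (n - j) : ℝ) / (Nat.factorial (n - j - k + 1) : ℝ))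
              * ∫ t in (0:ℝ)..T, (1 - F t ^ j) := by
  set P := (Finset.Icc 1 n).powersetCard k
  have hSP : ∀ ω, S ω ∈ P := fun ω => Finset.mem_powersetCard.mpr (hSrange ω)
  have hprob : ∀ s ∈ P, μ.real {ω | S ω = s} = 1 / n.choose k :=
    fun s hs => hSunif s (Finset.mem_powersetCard.mp hs).1 (Finset.mem_powersetCard.mp hs).2
  have hsum : ∑ s ∈ P, μ {ω | S ω = s} = μ univ := by
    rw [measure_univ, ← ENNReal.toReal_eq_one_iff,
      ENNReal.toReal_sum fun s _ => measure_ne_top μ _]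
    simp only [← measureReal_def]
    rw [Finset.sum_congr rfl hprob, Finset.sum_const, Finset.card_powersetCard, Nat.card_Icc,
      add_tsub_cancel_right, nsmul_eq_mul,
      mul_one_div_cancel (by exact_mod_cast (Nat.choose_pos hkn).ne')]
  set G : ℕ → ℝ := fun d => ∫ t in (0 : ℝ)..T, 1 - F t ^ d
  have hsurv := integral_survPDset (g := G) (integral_blockMax hAmeas hAiid hT.le hF0 hFT hAcdf)
  rw [integral_comp_eq_sum_of_indep_index (f := fun s A => survPDset A s)
    (measurable_pi_lambda _ hAmeas) hSP hsum (fun s _ => hindep s)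
    (fun s _ => (measurable_survPDset s).stronglyMeasurable) (fun s _ => (hsurv s).1)]
  simp only [smul_eq_mul, (hsurv _).2]
  rw [Finset.sum_congr rfl fun s hs => by rw [hprob s hs], ← Finset.mul_sum,
    Finset.sum_powersetCard_sum_consecutive hk2 G, one_div_mul_eq_div,
    Finset.sum_Icc_sub_mul_choose_div_choose hk2 hkn]

/-- expected PD (minus the stem age) of the tree spanned by a uniform random
`k`-subset of the `n` tips:
`E(S_{n,k}*) = k(k-1)((n-k)!/n!) Σ_{j=1}^{n-k+1} ((n-j)!/(n-j-k+1)!) ∫₀^T (1-F(t)^j) dt`. -/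
theorem expected_PD_k_of_n_sampling
    {Ω : Type*} [MeasurableSpace Ω] (μ : Measure Ω) [IsProbabilityMeasure μ]
    (n k : ℕ) (hn : 2 ≤ n) (hk2 : 2 ≤ k) (hkn : k ≤ n)
    (T : ℝ) (hT : 0 < T)
    (F : ℝ → ℝ) (hFcont : Continuous F) (hFmono : Monotone F)
    (hF0 : F 0 = 0) (hFT : F T = 1)
    (A : ℕ → Ω → ℝ) (hAmeas : ∀ i, Measurable (A i))
    (hAiid : iIndepFun A μ)
    (hAcdf : ∀ i, ∀ t ∈ Set.Icc 0 T, (μ {ω | A i ω ≤ t}).toReal = F t)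
    (S : Ω → Finset ℕ)
    (hSrange : ∀ ω, S ω ⊆ Finset.Icc 1 n ∧ (S ω).card = k)
    (hSunif : ∀ s : Finset ℕ, s ⊆ Finset.Icc 1 n → s.card = k →
      (μ {ω | S ω = s}).toReal = 1 / (n.choose k : ℝ))
    (hindep : ∀ (s : Finset ℕ) (t : Set (ℕ → ℝ)), MeasurableSet t →
      μ ({ω | S ω = s} ∩ (fun ω i => A i ω) ⁻¹' t)
        = μ {ω | S ω = s} * μ ((fun ω i => A i ω) ⁻¹' t)) :
    ∫ ω, survPDset (fun i => A i ω) (S ω) ∂μ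
      = (k : ℝ) * ((k : ℝ) - 1) * ((Nat.factorial (n - k) : ℝ) / (Nat.factorial n : ℝ))
        * ∑ j ∈ Finset.Icc 1 (n - k + 1),
            ((Nat.factorial (n - j) : ℝ) / (Nat.factorial (n - j - k + 1) : ℝ))
              * ∫ t in (0:ℝ)..T, (1 - F t ^ j) :=
  expected_PD_k_of_n_sampling_general μ n k hk2 hkn T hT F hF0 hFT A hAmeas hAiid hAcdf S hSrange
    hSunif hindep
end

section
/- Let T>0 and let G:[0,T]→[0,1] be a nondecreasing right-continuous function with G(0)=0, G(T)=1, ∫₀^T(1-G(t))dt > 0 and ∫₀^T G(t)(1-G(t))dt > 0. Define π(p) := p·∫₀^T (1-G(t))/(1-(1-p)G(t)) dt / ∫₀^T (1-G(t)) dt for p∈(0,1], with derivative π'(p) = ∫₀^T [(1-G(t))/(1-(1-p)G(t))]² dt / ∫₀^T (1-G(t)) dt. Then there exists a unique p*∈(0,1) such that π'(p*) = 1; moreover π'(p) > 1 for p∈(0,p*) and π'(p) < 1 for p∈(p*,1). -/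
open MeasureTheory Filter Set

/-! Write `F p = ∫₀^T ((1 - G) / (1 - (1 - p) G))²`, so that `π' p = F p / ∫₀^T (1 - G)`.
The integrand decreases in `p`, strictly where `0 < G < 1`, a set of positive measure since
`∫₀^T G (1 - G) > 0`; hence `F` is strictly decreasing. By dominated convergence `F` is continuous
on `[0, 1]`: at `p = 0` the integrand is `1` where `G < 1` and `(0 / 0)² = 0` where `G = 1`, which
is also its limit as `p → 0⁺`. Finally `F 1 = ∫(1 - G) - ∫G (1 - G)` and
`F 0 ≥ ∫(1 - G) + ∫G (1 - G)`, so the intermediate value theorem gives the unique crossing. -/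

/-- The derivative of the phylogenetic diversity ratio:
`π'(p) = ∫₀^T ((1-G)/(1-(1-p)G))² dt / ∫₀^T (1-G) dt`. -/
noncomputable def pdRatioDeriv (G : ℝ → ℝ) (T p : ℝ) : ℝ :=
  (∫ t in (0:ℝ)..T, ((1 - G t) / (1 - (1 - p) * G t)) ^ 2) / ∫ t in (0:ℝ)..T, (1 - G t)

open scoped Interval

theorem intervalIntegral_pos_of_support_subset {f g : ℝ → ℝ} {a b : ℝ} {μ : Measure ℝ}
    (hf : 0 ≤ᵐ[μ.restrict (Ι a b)] f) (hfi : IntervalIntegrable f μ a b)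
    (hg : 0 ≤ᵐ[μ.restrict (Ι a b)] g) (hgi : IntervalIntegrable g μ a b)
    (hsupp : Function.support g ∩ Ioc a b ⊆ Function.support f)
    (hpos : 0 < ∫ t in a..b, g t ∂μ) : 0 < ∫ t in a..b, f t ∂μ := by
  obtain ⟨hab, hμ⟩ := (intervalIntegral.integral_pos_iff_support_of_nonneg_ae' hg hgi).1 hpos
  rw [intervalIntegral.integral_pos_iff_support_of_nonneg_ae' hf hfi]
  exact ⟨hab, hμ.trans_le (measure_mono (subset_inter hsupp inter_subset_right))⟩

theorem intervalIntegrable_comp_of_abs_le {G φ : ℝ → ℝ} {a b C : ℝ} {μ : Measure ℝ}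
    [IsLocallyFiniteMeasure μ] (hG : AEMeasurable G (μ.restrict (Ι a b))) (hφ : Measurable φ)
    (hC : ∀ t ∈ Ι a b, |φ (G t)| ≤ C) : IntervalIntegrable (fun t => φ (G t)) μ a b :=
  (intervalIntegrable_const (c := C)).mono_fun (hφ.comp_aemeasurable hG).aestronglyMeasurable
    ((ae_restrict_iff' measurableSet_uIoc).2 <| ae_of_all _ fun t ht =>
      (hC t ht).trans (le_abs_self C))

noncomputable def pdDerivIntegrand (p x : ℝ) : ℝ :=
  ((1 - x) / (1 - (1 - p) * x)) ^ 2

theorem measurable_pdDerivIntegrand (p : ℝ) : Measurable (pdDerivIntegrand p) := by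
  unfold pdDerivIntegrand; fun_prop

theorem abs_pdDerivIntegrand_le_one {p x : ℝ} (hp : 0 ≤ p) (hx0 : 0 ≤ x) (hx1 : x ≤ 1) :
    |pdDerivIntegrand p x| ≤ 1 := by
  have hle : 1 - x ≤ 1 - (1 - p) * x := by nlinarith
  rw [pdDerivIntegrand, abs_pow, pow_le_one_iff_of_nonneg (abs_nonneg _) two_ne_zero,
    abs_of_nonneg (div_nonneg (by linarith) (by linarith))]
  exact div_le_one_of_le₀ hle (by linarith)

theorem continuousOn_pdDerivIntegrand {x : ℝ} (hx0 : 0 ≤ x) (hx1 : x ≤ 1) :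
    ContinuousOn (pdDerivIntegrand · x) (Ici 0) := by
  rcases hx1.eq_or_lt with rfl | hx1
  · simp only [pdDerivIntegrand, sub_self, zero_div]
    exact continuousOn_const
  · refine ((continuousOn_const.div (by fun_prop) fun p hp => ?_).pow 2)
    nlinarith [mul_nonneg (mem_Ici.1 hp) hx0]

theorem pdDerivIntegrand_antitoneOn {x : ℝ} (hx0 : 0 ≤ x) (hx1 : x ≤ 1) :
    AntitoneOn (pdDerivIntegrand · x) (Ici 0) := by
  rcases hx1.eq_or_lt with rfl | hx1
  · intro p _ q _ _
    simp [pdDerivIntegrand]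
  · intro p hp q _ hpq
    have hden : 0 < 1 - (1 - p) * x := by nlinarith [mul_nonneg (mem_Ici.1 hp) hx0]
    have hle : 1 - (1 - p) * x ≤ 1 - (1 - q) * x := by
      nlinarith [mul_le_mul_of_nonneg_right hpq hx0]
    exact pow_le_pow_left₀ (div_nonneg (by linarith) (by linarith))
      (div_le_div_of_nonneg_left (by linarith) hden hle) 2

theorem pdDerivIntegrand_strictAntiOn {x : ℝ} (hx0 : 0 < x) (hx1 : x < 1) :
    StrictAntiOn (pdDerivIntegrand · x) (Ici 0) := by
  intro p hp q _ hpq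
  have hden : 0 < 1 - (1 - p) * x := by nlinarith [mul_nonneg (mem_Ici.1 hp) hx0.le]
  have hlt : 1 - (1 - p) * x < 1 - (1 - q) * x := by nlinarith [mul_lt_mul_of_pos_right hpq hx0]
  exact pow_lt_pow_left₀ (div_lt_div_of_pos_left (by linarith) hden hlt)
    (div_nonneg (by linarith) (by linarith)) two_ne_zero

theorem le_pdDerivIntegrand_zero (x : ℝ) : 1 - x + x * (1 - x) ≤ pdDerivIntegrand 0 x := by
  rcases eq_or_ne x 1 with rfl | hx
  · norm_num [pdDerivIntegrand]
  · rw [pdDerivIntegrand, sub_zero, one_mul, div_self (sub_ne_zero.2 hx.symm)]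
    nlinarith [sq_nonneg x]

theorem pdDerivIntegrand_one (x : ℝ) : pdDerivIntegrand 1 x = 1 - x - x * (1 - x) := by
  simp only [pdDerivIntegrand, sub_self, zero_mul, sub_zero, div_one]
  ring

noncomputable def pdDerivNumerator (G : ℝ → ℝ) (T p : ℝ) : ℝ :=
  ∫ t in (0:ℝ)..T, pdDerivIntegrand p (G t)

section

variable {G : ℝ → ℝ} {T : ℝ}

theorem pdRatioDeriv_eq (p : ℝ) :
    pdRatioDeriv G T p = pdDerivNumerator G T p / ∫ t in (0:ℝ)..T, (1 - G t) :=
  rfl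

variable (hT : 0 ≤ T) (hGm : MonotoneOn G (Icc 0 T)) (hG : MapsTo G (Icc 0 T) (Icc 0 1))
include hT hGm hG

theorem intervalIntegrable_comp_of_monotoneOn {φ : ℝ → ℝ} {C : ℝ} (hφ : Measurable φ)
    (hC : ∀ x ∈ Icc (0:ℝ) 1, |φ x| ≤ C) : IntervalIntegrable (fun t => φ (G t)) volume 0 T := by
  rw [← uIcc_of_le hT] at hGm
  refine intervalIntegrable_comp_of_abs_le (C := C)
    hGm.intervalIntegrable.aestronglyMeasurable_restrict_uIoc.aemeasurable hφ fun t ht => ?_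
  exact hC _ (hG (Ioc_subset_Icc_self (uIoc_of_le hT ▸ ht)))

theorem intervalIntegrable_pdDerivIntegrand_comp {p : ℝ} (hp : 0 ≤ p) :
    IntervalIntegrable (fun t => pdDerivIntegrand p (G t)) volume 0 T :=
  intervalIntegrable_comp_of_monotoneOn hT hGm hG (measurable_pdDerivIntegrand p)
    fun _ hx => abs_pdDerivIntegrand_le_one hp hx.1 hx.2

theorem intervalIntegrable_one_sub_comp :
    IntervalIntegrable (fun t => 1 - G t) volume 0 T :=
  intervalIntegrable_comp_of_monotoneOn (φ := fun x => 1 - x) (C := 1) hT hGm hG (by fun_prop)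
    fun x hx => abs_le.2 ⟨by linarith [hx.2], by linarith [hx.1]⟩

theorem intervalIntegrable_mul_one_sub_comp :
    IntervalIntegrable (fun t => G t * (1 - G t)) volume 0 T :=
  intervalIntegrable_comp_of_monotoneOn (φ := fun x => x * (1 - x)) (C := 1) hT hGm hG
    (by fun_prop) fun x hx => abs_le.2 ⟨by nlinarith [hx.1, hx.2], by nlinarith [hx.1, hx.2]⟩

theorem continuousOn_pdDerivNumerator : ContinuousOn (pdDerivNumerator G T) (Ici 0) := by
  have hGΙ : MapsTo G (Ι 0 T) (Icc 0 1) := hG.mono_left (uIoc_of_le hT ▸ Ioc_subset_Icc_self)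
  intro p₀ hp₀
  refine intervalIntegral.continuousWithinAt_of_dominated_interval (bound := fun _ => 1) ?_ ?_
    intervalIntegrable_const (ae_of_all _ fun t ht =>
      continuousOn_pdDerivIntegrand (hGΙ ht).1 (hGΙ ht).2 p₀ hp₀)
  · filter_upwards [self_mem_nhdsWithin] with p hp
    exact (intervalIntegrable_pdDerivIntegrand_comp hT hGm hG hp).aestronglyMeasurable_restrict_uIoc
  · filter_upwards [self_mem_nhdsWithin] with p hp
    exact ae_of_all _ fun t ht => abs_pdDerivIntegrand_le_one hp (hGΙ ht).1 (hGΙ ht).2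

theorem strictAntiOn_pdDerivNumerator (hJ : 0 < ∫ t in (0:ℝ)..T, G t * (1 - G t)) :
    StrictAntiOn (pdDerivNumerator G T) (Ici 0) := by
  have hGΙ : MapsTo G (Ι 0 T) (Icc 0 1) := hG.mono_left (uIoc_of_le hT ▸ Ioc_subset_Icc_self)
  intro p hp q hq hpq
  have hp' := intervalIntegrable_pdDerivIntegrand_comp hT hGm hG hp
  have hq' := intervalIntegrable_pdDerivIntegrand_comp hT hGm hG hq
  rw [← sub_pos, pdDerivNumerator, pdDerivNumerator, ← intervalIntegral.integral_sub hp' hq']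
  refine intervalIntegral_pos_of_support_subset ?_ (hp'.sub hq') ?_
    (intervalIntegrable_mul_one_sub_comp hT hGm hG) ?_ hJ
  · refine (ae_restrict_iff' measurableSet_uIoc).2 (ae_of_all _ fun t ht => ?_)
    exact sub_nonneg.2 (pdDerivIntegrand_antitoneOn (hGΙ ht).1 (hGΙ ht).2 hp hq hpq.le)
  · refine (ae_restrict_iff' measurableSet_uIoc).2 (ae_of_all _ fun t ht => ?_)
    exact mul_nonneg (hGΙ ht).1 (sub_nonneg.2 (hGΙ ht).2)
  · rintro t ⟨hne, ht⟩
    have ⟨hG0, hG1⟩ := hGΙ (uIoc_of_le hT ▸ ht)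
    have hne : G t ≠ 0 ∧ 1 - G t ≠ 0 := mul_ne_zero_iff.1 hne
    exact (sub_pos.2 (pdDerivIntegrand_strictAntiOn (hG0.lt_of_ne' hne.1)
      (hG1.lt_of_ne (sub_ne_zero.1 hne.2).symm) hp hq hpq)).ne'

theorem pdDerivNumerator_one :
    pdDerivNumerator G T 1
      = (∫ t in (0:ℝ)..T, (1 - G t)) - ∫ t in (0:ℝ)..T, G t * (1 - G t) := by
  rw [← intervalIntegral.integral_sub (intervalIntegrable_one_sub_comp hT hGm hG)
    (intervalIntegrable_mul_one_sub_comp hT hGm hG)]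
  exact intervalIntegral.integral_congr fun t _ => pdDerivIntegrand_one (G t)

theorem add_le_pdDerivNumerator_zero :
    (∫ t in (0:ℝ)..T, (1 - G t)) + ∫ t in (0:ℝ)..T, G t * (1 - G t) ≤ pdDerivNumerator G T 0 := by
  rw [← intervalIntegral.integral_add (intervalIntegrable_one_sub_comp hT hGm hG)
    (intervalIntegrable_mul_one_sub_comp hT hGm hG)]
  exact intervalIntegral.integral_mono_on hT
    ((intervalIntegrable_one_sub_comp hT hGm hG).add
      (intervalIntegrable_mul_one_sub_comp hT hGm hG))
    (intervalIntegrable_pdDerivIntegrand_comp hT hGm hG le_rfl)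
    fun t _ => le_pdDerivIntegrand_zero (G t)

end

theorem pdRatio_tipping_point_general
    (T : ℝ) (hT : 0 < T) (G : ℝ → ℝ)
    (hGmono : MonotoneOn G (Set.Icc 0 T))
    (hGrange : ∀ t ∈ Set.Icc 0 T, G t ∈ Set.Icc (0:ℝ) 1)
    (hInt : 0 < ∫ t in (0:ℝ)..T, (1 - G t))
    (hInt2 : 0 < ∫ t in (0:ℝ)..T, G t * (1 - G t)) :
    ∃ pstar ∈ Set.Ioo (0:ℝ) 1,
      pdRatioDeriv G T pstar = 1 ∧
      (∀ q ∈ Set.Ioo (0:ℝ) pstar, 1 < pdRatioDeriv G T q) ∧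
      (∀ q ∈ Set.Ioo pstar 1, pdRatioDeriv G T q < 1) ∧
      (∀ q ∈ Set.Ioo (0:ℝ) 1, pdRatioDeriv G T q = 1 → q = pstar) := by
  have hanti : StrictAntiOn (pdDerivNumerator G T) (Icc 0 1) :=
    (strictAntiOn_pdDerivNumerator hT.le hGmono hGrange hInt2).mono Icc_subset_Ici_self
  have hI : (∫ t in (0:ℝ)..T, (1 - G t))
      ∈ Ioo (pdDerivNumerator G T 1) (pdDerivNumerator G T 0) := by
    have := add_le_pdDerivNumerator_zero hT.le hGmono hGrange
    rw [pdDerivNumerator_one hT.le hGmono hGrange]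
    constructor <;> linarith
  obtain ⟨pstar, hpstar, hF⟩ := intermediate_value_Ioo' zero_le_one
    ((continuousOn_pdDerivNumerator hT.le hGmono hGrange).mono Icc_subset_Ici_self) hI
  rw [← hF] at hInt
  simp only [pdRatioDeriv_eq, ← hF]
  refine ⟨pstar, hpstar, div_self hInt.ne', fun q hq => ?_, fun q hq => ?_, fun q hq hq1 => ?_⟩
  · rw [one_lt_div hInt]
    exact hanti ⟨hq.1.le, hq.2.le.trans hpstar.2.le⟩ (Ioo_subset_Icc_self hpstar) hq.2
  · rw [div_lt_one hInt]
    exact hanti (Ioo_subset_Icc_self hpstar) ⟨hpstar.1.le.trans hq.1.le, hq.2.le⟩ hq.1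
  · rw [div_eq_one_iff_eq hInt.ne'] at hq1
    exact hanti.injOn (Ioo_subset_Icc_self hq) (Ioo_subset_Icc_self hpstar) hq1

/-- there is a unique `p* ∈ (0,1)` with `π'(p*) = 1`; moreover `π' > 1` on
`(0,p*)` and `π' < 1` on `(p*,1)`. -/
theorem pdRatio_tipping_point
    (T : ℝ) (hT : 0 < T) (G : ℝ → ℝ)
    (hGmono : MonotoneOn G (Set.Icc 0 T))
    (hGrc : ∀ t ∈ Set.Ico 0 T, ContinuousWithinAt G (Set.Ici t) t)
    (hGrange : ∀ t ∈ Set.Icc 0 T, G t ∈ Set.Icc (0:ℝ) 1)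
    (hG0 : G 0 = 0) (hGT : G T = 1)
    (hInt : 0 < ∫ t in (0:ℝ)..T, (1 - G t))
    (hInt2 : 0 < ∫ t in (0:ℝ)..T, G t * (1 - G t)) :
    ∃ pstar ∈ Set.Ioo (0:ℝ) 1,
      pdRatioDeriv G T pstar = 1 ∧
      (∀ q ∈ Set.Ioo (0:ℝ) pstar, 1 < pdRatioDeriv G T q) ∧
      (∀ q ∈ Set.Ioo pstar 1, pdRatioDeriv G T q < 1) ∧
      (∀ q ∈ Set.Ioo (0:ℝ) 1, pdRatioDeriv G T q = 1 → q = pstar) :=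
  pdRatio_tipping_point_general T hT G hGmono hGrange hInt hInt2
end
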